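/- Let k ≥ 2 and (∧V, d) a Sullivan algebra with dim V < ∞. On the algebra ∧V ⊗ ∧s^{k-1}V ⊗ ∧s^kV define the derivation d of degree 1 by d(v) = dv, d(s^{k-1}v) = (−1)^{k-1}s^{(k-1)}(dv), and d(s^kv) = s^{k-1}v + (−1)^k s^{(k)}(dv), where s^{(k)} is the derivation sending v ↦ s^kv and s^{k-1}v, s^kv ↦ 0. Then d ∘ d = 0, and the map ε̃ to ∧V given by v ↦ v, s^{k-1}v ↦ 0, s^kv ↦ 0 is a quasi-isomorphism of dgas. -/

import Mathlib

noncomputable section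
namespace Brane

/-- The monomial in a generator family indexed by a list. -/
def mon {A G : Type} [Ring A] (gen : G → A) (l : List G) : A := (l.map gen).prod

/-- The degree-`m` component: the `K`-span of monomials of total degree `m`. -/
def grading (K : Type) {A G : Type} [Field K] [Ring A] [Algebra K A]
    (gen : G → A) (dg : G → ℤ) (m : ℤ) : Submodule K A :=
  Submodule.span K {a : A | ∃ l : List G, (l.map dg).sum = m ∧ a = mon gen l}

/-- Graded commutativity on generators (Koszul signs). -/
def GradedComm (K : Type) {A G : Type} [Field K] [Ring A] [Algebra K A]
    (gen : G → A) (dg : G → ℤ) : Prop :=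
  ∀ i j, gen i * gen j = ((-1 : K) ^ (dg i * dg j)) • (gen j * gen i)

/-- `A` is the free graded-commutative algebra on the generators: the reduced sorted
monomials (odd generators appearing at most once) form a `K`-basis. -/
def IsFreeGCAOn (K : Type) {A G : Type} [Field K] [Ring A] [Algebra K A] [LinearOrder G]
    (gen : G → A) (dg : G → ℤ) : Prop :=
  ∃ b : Module.Basis {l : List G // l.Pairwise (· ≤ ·) ∧ ∀ g, Odd (dg g) → l.count g ≤ 1} K A,
    ∀ l, b l = mon gen l.1

/-- A graded `K`-linear derivation of degree `r` (Koszul sign rule). -/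
def IsGradedDer (K : Type) {A G : Type} [Field K] [Ring A] [Algebra K A]
    (gen : G → A) (dg : G → ℤ) (r : ℤ) (D : A →ₗ[K] A) : Prop :=
  (∀ (i : ℤ) (a : A), a ∈ grading K gen dg i → D a ∈ grading K gen dg (i + r)) ∧
  (∀ (i : ℤ) (a b : A), a ∈ grading K gen dg i →
    D (a * b) = D a * b + ((-1 : K) ^ (r * i)) • (a * D b))

/-- A differential: a graded derivation of degree `1` squaring to zero. -/
def IsDifferential (K : Type) {A G : Type} [Field K] [Ring A] [Algebra K A]
    (gen : G → A) (dg : G → ℤ) (D : A →ₗ[K] A) : Prop :=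
  IsGradedDer K gen dg 1 D ∧ ∀ a, D (D a) = 0

/-- The Sullivan (nilpotence) condition. -/
def SullivanCond (K : Type) {A G : Type} [Field K] [Ring A] [Algebra K A]
    (gen : G → A) (D : A →ₗ[K] A) : Prop :=
  ∃ w : G → ℕ, ∀ g, D (gen g) ∈ Algebra.adjoin K (gen '' {g' | w g' < w g})

/-- Decomposable elements (span of monomials of length at least two). -/
def decomposables (K : Type) {A G : Type} [Field K] [Ring A] [Algebra K A]
    (gen : G → A) : Submodule K A :=
  Submodule.span K {a : A | ∃ l : List G, 2 ≤ l.length ∧ a = mon gen l}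


/-!
`D` is a derivation, so `D ∘ D = ½ [D, D]` is a derivation, and it suffices to check that it
vanishes on generators. On `s^{k-1}v` and `s^kv` this reduces to `[D, s^{(k-1)}] = 0` and
`[D, s^{(k)}] = s^{(k-1)}` on `∧V`, which hold because both sides are derivations along
`∧V → ∧V ⊗ ∧s^{k-1}V ⊗ ∧s^kV` that agree on generators.

For the quasi-isomorphism, let `θ` be the derivation of degree `-1` with `θ(s^{k-1}v) = s^kv`
and killing the other generators. Then `[D, θ] = Dθ + θD` is a derivation of degree `0` that
multiplies a monomial by its number of suspended letters. Inverting it on the monomials where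
this number is nonzero gives an operator `R` commuting with `D`, and `θR` is a homotopy between
the identity and `ε̃` followed by the inclusion of `∧V`. So a cocycle whose image under `ε̃` is
exact is exact; the inclusion of `∧V` gives surjectivity in homology.
-/

section Signs
variable {K : Type} [Field K]

lemma neg_one_zpow_eq_of_even_sub {m n : ℤ} (h : Even (m - n)) :
    (-1 : K) ^ m = (-1 : K) ^ n := by
  rw [← Int.cast_negOnePow, ← Int.cast_negOnePow, (Int.negOnePow_eq_iff m n).2 h]

lemma neg_one_zpow_mul (m n : ℤ) : (-1 : K) ^ m * (-1 : K) ^ n = (-1 : K) ^ (m + n) :=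
  (zpow_add₀ (by norm_num) m n).symm

lemma neg_one_zpow_add_one_add_neg_one_zpow (n : ℤ) :
    (-1 : K) ^ (n + 1) + (-1 : K) ^ n = 0 := by
  rw [zpow_add₀ (by norm_num), zpow_one]; ring

lemma neg_one_zpow_neg_natCast (n : ℕ) : (-1 : K) ^ (-(n : ℤ)) = (-1 : K) ^ n := by
  rw [← zpow_natCast]
  exact neg_one_zpow_eq_of_even_sub ⟨-(n : ℤ), by ring⟩

lemma neg_one_zpow_neg_natCast_sub_one {k : ℕ} (hk : 1 ≤ k) :
    (-1 : K) ^ (-((k : ℤ) - 1)) = (-1 : K) ^ (k - 1) := by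
  rw [show (k : ℤ) - 1 = ((k - 1 : ℕ) : ℤ) by omega, neg_one_zpow_neg_natCast]

lemma neg_one_pow_sub_one_add_neg_one_pow {k : ℕ} (hk : 1 ≤ k) :
    (-1 : K) ^ (k - 1) + (-1 : K) ^ k = 0 := by
  obtain ⟨m, rfl⟩ := Nat.exists_eq_add_of_le' hk
  simp [pow_succ]

end Signs

section Grading
variable {K A B G H : Type} [Field K] [Ring A] [Algebra K A] [Ring B] [Algebra K B]
  {gen : G → A} {dg : G → ℤ}

@[simp] lemma mon_nil (gen : G → A) : mon gen [] = 1 := rfl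

@[simp] lemma mon_cons (gen : G → A) (g : G) (l : List G) :
    mon gen (g :: l) = gen g * mon gen l := List.prod_cons

lemma mon_append (gen : G → A) (l₁ l₂ : List G) :
    mon gen (l₁ ++ l₂) = mon gen l₁ * mon gen l₂ := by simp [mon]

lemma map_mon (φ : A →ₐ[K] B) (gen : G → A) (l : List G) : φ (mon gen l) = mon (φ ∘ gen) l := by
  simp [mon, map_list_prod]

lemma mon_eq_zero_of_mem {l : List G} {g : G} (hg : g ∈ l) (h : gen g = 0) : mon gen l = 0 :=
  List.prod_eq_zero (List.mem_map.2 ⟨g, hg, h⟩)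

lemma mon_mem_grading (gen : G → A) (dg : G → ℤ) (l : List G) :
    mon gen l ∈ grading K gen dg (l.map dg).sum :=
  Submodule.subset_span ⟨l, rfl, rfl⟩

lemma one_mem_grading (gen : G → A) (dg : G → ℤ) : (1 : A) ∈ grading K gen dg 0 :=
  mon_mem_grading gen dg []

lemma gen_mem_grading (gen : G → A) (dg : G → ℤ) (g : G) : gen g ∈ grading K gen dg (dg g) := by
  simpa using mon_mem_grading (K := K) gen dg [g]

lemma grading_le_eqLocus {M : Type} [AddCommGroup M] [Module K M] {n : ℤ} {f f' : A →ₗ[K] M}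
    (h : ∀ l : List G, (l.map dg).sum = n → f (mon gen l) = f' (mon gen l)) :
    grading K gen dg n ≤ f.eqLocus f' :=
  Submodule.span_le.2 fun _ ⟨l, hl, hx⟩ => hx ▸ h l hl

lemma mul_mem_grading {i j : ℤ} {x y : A} (hx : x ∈ grading K gen dg i)
    (hy : y ∈ grading K gen dg j) : x * y ∈ grading K gen dg (i + j) := by
  induction hx using Submodule.span_induction with
  | mem x hx =>
    obtain ⟨l, rfl, rfl⟩ := hx
    induction hy using Submodule.span_induction with
    | mem y hy =>
      obtain ⟨l', rfl, rfl⟩ := hy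
      simpa [← mon_append] using mon_mem_grading (K := K) gen dg (l ++ l')
    | zero => simp
    | add y y' _ _ h h' => rw [mul_add]; exact add_mem h h'
    | smul c y _ h => rw [mul_smul_comm]; exact Submodule.smul_mem _ c h
  | zero => simp
  | add x x' _ _ h h' => rw [add_mul]; exact add_mem h h'
  | smul c x _ h => rw [smul_mul_assoc]; exact Submodule.smul_mem _ c h

lemma map_mem_grading {gen' : H → B} {dg' : H → ℤ} (φ : A →ₐ[K] B)
    (hφ : ∀ g, φ (gen g) ∈ grading K gen' dg' (dg g)) {n : ℤ} {x : A}
    (hx : x ∈ grading K gen dg n) : φ x ∈ grading K gen' dg' n := by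
  have hmon : ∀ l : List G, φ (mon gen l) ∈ grading K gen' dg' (l.map dg).sum := by
    intro l
    induction l with
    | nil => simpa using one_mem_grading (K := K) gen' dg'
    | cons g l ih => simpa using mul_mem_grading (hφ g) ih
  induction hx using Submodule.span_induction with
  | mem x hx => obtain ⟨l, rfl, rfl⟩ := hx; exact hmon l
  | zero => simp
  | add x x' _ _ h h' => rw [map_add]; exact add_mem h h'
  | smul c x _ h => rw [map_smul]; exact Submodule.smul_mem _ c h

lemma IsFreeGCAOn.linearMap_ext [LinearOrder G] {M : Type} [AddCommGroup M] [Module K M]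
    (hfree : IsFreeGCAOn K gen dg) {f f' : A →ₗ[K] M} (h : ∀ l, f (mon gen l) = f' (mon gen l)) :
    f = f' := by
  obtain ⟨b, hb⟩ := hfree
  exact b.ext fun i => by rw [hb]; exact h _

lemma GradedComm.gen_mul_mon (hcomm : GradedComm K gen dg) (g : G) (l : List G) :
    gen g * mon gen l = (-1 : K) ^ (dg g * (l.map dg).sum) • (mon gen l * gen g) := by
  induction l with
  | nil => simp
  | cons h l ih =>
    rw [mon_cons, ← mul_assoc, hcomm, smul_mul_assoc, mul_assoc, ih, mul_smul_comm, smul_smul,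
      neg_one_zpow_mul, List.map_cons, List.sum_cons, mul_add, mul_assoc]

lemma GradedComm.mon_mul_mon (hcomm : GradedComm K gen dg) (l l' : List G) :
    mon gen l * mon gen l' =
      (-1 : K) ^ ((l.map dg).sum * (l'.map dg).sum) • (mon gen l' * mon gen l) := by
  induction l with
  | nil => simp
  | cons g l ih =>
    rw [mon_cons, mul_assoc, ih, mul_smul_comm, ← mul_assoc, hcomm.gen_mul_mon, smul_mul_assoc,
      smul_smul, mul_assoc, neg_one_zpow_mul, List.map_cons, List.sum_cons]
    congr 2; ring

lemma GradedComm.mul_comm_of_mem_grading (hcomm : GradedComm K gen dg) {i j : ℤ} {x y : A}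
    (hx : x ∈ grading K gen dg i) (hy : y ∈ grading K gen dg j) :
    x * y = (-1 : K) ^ (i * j) • (y * x) := by
  have hmon : ∀ l : List G, (l.map dg).sum = i →
      mon gen l * y = (-1 : K) ^ (i * j) • (y * mon gen l) := by
    rintro l rfl
    refine grading_le_eqLocus (f := LinearMap.mulLeft K (mon gen l))
      (f' := (-1 : K) ^ ((l.map dg).sum * j) • LinearMap.mulRight K (mon gen l))
      (fun l' hl' => ?_) hy
    simp [hcomm.mon_mul_mon l l', hl']
  exact grading_le_eqLocus (f := LinearMap.mulRight K y)
    (f' := (-1 : K) ^ (i * j) • LinearMap.mulLeft K y) (fun l hl => by simpa using hmon l hl) hx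

end Grading

section Derivations
variable {K A B C G H : Type} [Field K] [Ring A] [Algebra K A] [Ring B] [Algebra K B]
  [Ring C] [Algebra K C] {gen : G → A} {dg : G → ℤ}

def IsGradedDerAlong (K : Type) {A B G : Type} [Field K] [Ring A] [Algebra K A] [Ring B]
    [Algebra K B] (gen : G → A) (dg : G → ℤ) (φ : A →ₐ[K] B) (r : ℤ) (δ : A →ₗ[K] B) : Prop :=
  ∀ (i : ℤ) (a b : A), a ∈ grading K gen dg i →
    δ (a * b) = δ a * φ b + (-1 : K) ^ (r * i) • (φ a * δ b)

lemma IsGradedDer.isGradedDerAlong {r : ℤ} {D : A →ₗ[K] A} (hD : IsGradedDer K gen dg r D) :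
    IsGradedDerAlong K gen dg (AlgHom.id K A) r D :=
  hD.2

lemma isGradedDerAlong_zero (φ : A →ₐ[K] B) (r : ℤ) : IsGradedDerAlong K gen dg φ r 0 := by
  intro i a b _
  simp

namespace IsGradedDerAlong
variable {φ : A →ₐ[K] B} {r : ℤ} {δ δ' : A →ₗ[K] B}

lemma comp_left (ψ : B →ₐ[K] C) (h : IsGradedDerAlong K gen dg φ r δ) :
    IsGradedDerAlong K gen dg (ψ.comp φ) r (ψ.toLinearMap ∘ₗ δ) := by
  intro i a b ha
  simp [h i a b ha]

lemma comp_right {gen' : H → C} {dg' : H → ℤ} (φ' : C →ₐ[K] A)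
    (hφ' : ∀ g, φ' (gen' g) ∈ grading K gen dg (dg' g)) (h : IsGradedDerAlong K gen dg φ r δ) :
    IsGradedDerAlong K gen' dg' (φ.comp φ') r (δ ∘ₗ φ'.toLinearMap) := by
  intro i a b ha
  simp [h i _ _ (map_mem_grading φ' hφ' ha)]

lemma map_one (h : IsGradedDerAlong K gen dg φ r δ) : δ 1 = 0 := by
  simpa using h 0 1 1 (one_mem_grading gen dg)

lemma apply_mon_eq (h : IsGradedDerAlong K gen dg φ r δ) (h' : IsGradedDerAlong K gen dg φ r δ')
    (hgen : ∀ g, δ (gen g) = δ' (gen g)) (l : List G) : δ (mon gen l) = δ' (mon gen l) := by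
  induction l with
  | nil => rw [mon_nil, h.map_one, h'.map_one]
  | cons g l ih =>
    rw [mon_cons, h _ _ _ (gen_mem_grading gen dg g), h' _ _ _ (gen_mem_grading gen dg g), hgen,
      ih]

lemma apply_eq_of_mem_grading (h : IsGradedDerAlong K gen dg φ r δ)
    (h' : IsGradedDerAlong K gen dg φ r δ') (hgen : ∀ g, δ (gen g) = δ' (gen g)) {n : ℤ} {x : A}
    (hx : x ∈ grading K gen dg n) : δ x = δ' x :=
  grading_le_eqLocus (fun l _ => h.apply_mon_eq h' hgen l) hx

lemma eq_of_isFreeGCAOn [LinearOrder G] (hfree : IsFreeGCAOn K gen dg)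
    (h : IsGradedDerAlong K gen dg φ r δ) (h' : IsGradedDerAlong K gen dg φ r δ')
    (hgen : ∀ g, δ (gen g) = δ' (gen g)) : δ = δ' :=
  hfree.linearMap_ext (h.apply_mon_eq h' hgen)

end IsGradedDerAlong

lemma IsGradedDer.apply_mon_of_apply_gen_eq_smul {E : A →ₗ[K] A} (hE : IsGradedDer K gen dg 0 E)
    {c : G → K} (hc : ∀ g, E (gen g) = c g • gen g) (l : List G) :
    E (mon gen l) = (l.map c).sum • mon gen l := by
  induction l with
  | nil => simpa using hE.isGradedDerAlong.map_one
  | cons g l ih =>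
    rw [mon_cons, hE.2 _ _ _ (gen_mem_grading gen dg g), hc, ih]
    simp [add_smul]

def gradedBracket (r₁ r₂ : ℤ) (D₁ D₂ : A →ₗ[K] A) : A →ₗ[K] A :=
  D₁ ∘ₗ D₂ - (-1 : K) ^ (r₁ * r₂) • (D₂ ∘ₗ D₁)

lemma gradedBracket_apply (r₁ r₂ : ℤ) (D₁ D₂ : A →ₗ[K] A) (x : A) :
    gradedBracket r₁ r₂ D₁ D₂ x = D₁ (D₂ x) - (-1 : K) ^ (r₁ * r₂) • D₂ (D₁ x) :=
  rfl

lemma IsGradedDer.gradedBracket {r₁ r₂ : ℤ} {D₁ D₂ : A →ₗ[K] A}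
    (h₁ : IsGradedDer K gen dg r₁ D₁) (h₂ : IsGradedDer K gen dg r₂ D₂) :
    IsGradedDer K gen dg (r₁ + r₂) (gradedBracket r₁ r₂ D₁ D₂) := by
  refine ⟨fun i a ha => ?_, fun i a b ha => ?_⟩
  · rw [gradedBracket_apply]
    refine sub_mem ?_ (Submodule.smul_mem _ _ ?_)
    · simpa [add_assoc, add_comm r₂] using h₁.1 _ _ (h₂.1 i a ha)
    · simpa [add_assoc] using h₂.1 _ _ (h₁.1 i a ha)
  · simp only [gradedBracket_apply, h₁.2 _ _ _ ha, h₂.2 _ _ _ ha, map_add, map_smul,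
      h₁.2 _ _ _ (h₂.1 _ _ ha), h₂.2 _ _ _ (h₁.1 _ _ ha), smul_add, mul_sub, sub_mul, smul_sub,
      mul_smul_comm, smul_mul_assoc, smul_smul]
    match_scalars <;>
      simp only [mul_one, neg_one_zpow_mul, sub_eq_zero, neg_inj] <;>
      exact neg_one_zpow_eq_of_even_sub (by ring_nf; simp [parity_simps])

end Derivations

section FreeDerivations
variable {K A M N G : Type} [Field K] [Ring A] [Algebra K A] [AddCommGroup M] [Module K M]
  [AddCommGroup N] [Module K N] {gen : G → A} {dg : G → ℤ}

/-- `F` respects the relations of the free graded-commutative algebra. -/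
def IsGradedSymmetric (K : Type) {M G : Type} [Field K] [AddCommGroup M] [Module K M]
    (dg : G → ℤ) (F : List G → M) : Prop :=
  (∀ u v a c, F (u ++ a :: c :: v) = (-1 : K) ^ (dg a * dg c) • F (u ++ c :: a :: v)) ∧
    ∀ g v, Odd (dg g) → F (g :: g :: v) = 0

namespace IsGradedSymmetric
variable {F F' : List G → M}

lemma comp (f : M →ₗ[K] N) (h : IsGradedSymmetric K dg F) : IsGradedSymmetric K dg (f ∘ F) :=
  ⟨fun u v a c => by simp [h.1 u v a c], fun g v hg => by simp [h.2 g v hg]⟩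

lemma sub (h : IsGradedSymmetric K dg F) (h' : IsGradedSymmetric K dg F') :
    IsGradedSymmetric K dg (F - F') :=
  ⟨fun u v a c => by simp [h.1 u v a c, h'.1 u v a c, smul_sub],
    fun g v hg => by simp [h.2 g v hg, h'.2 g v hg]⟩

lemma exists_smul_of_perm (h : IsGradedSymmetric K dg F) {l₁ l₂ : List G} (hp : l₁.Perm l₂) :
    ∃ c : K, ∀ u, F (u ++ l₁) = c • F (u ++ l₂) := by
  induction hp with
  | nil => exact ⟨1, by simp⟩
  | cons x _ ih =>
    obtain ⟨c, hc⟩ := ih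
    exact ⟨c, fun u => by simpa using hc (u ++ [x])⟩
  | swap x y l => exact ⟨_, fun u => h.1 u l y x⟩
  | trans _ _ ih₁ ih₂ =>
    obtain ⟨c₁, hc₁⟩ := ih₁
    obtain ⟨c₂, hc₂⟩ := ih₂
    exact ⟨c₁ * c₂, fun u => by rw [hc₁, hc₂, smul_smul]⟩

lemma eq_zero_of_odd_count [DecidableEq G] (h : IsGradedSymmetric K dg F) {l : List G} {g : G}
    (hg : Odd (dg g)) (hcount : 2 ≤ l.count g) : F l = 0 := by
  have hmem : g ∈ l := List.count_pos_iff.1 (by omega)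
  have hmem' : g ∈ l.erase g := List.count_pos_iff.1 (by rw [List.count_erase_self]; omega)
  obtain ⟨c, hc⟩ := h.exists_smul_of_perm
    ((List.perm_cons_erase hmem).trans ((List.perm_cons_erase hmem').cons g))
  simpa [h.2 g _ hg] using hc []

lemma eq_zero [LinearOrder G] (h : IsGradedSymmetric K dg F)
    (hbasis : ∀ l : List G, l.Pairwise (· ≤ ·) → (∀ g, Odd (dg g) → l.count g ≤ 1) → F l = 0)
    (l : List G) : F l = 0 := by
  obtain ⟨c, hc⟩ := h.exists_smul_of_perm (List.perm_insertionSort (· ≤ ·) l).symm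
  rw [← List.nil_append l, hc [], List.nil_append, smul_eq_zero]
  right
  by_cases hred : ∀ g, Odd (dg g) → (l.insertionSort (· ≤ ·)).count g ≤ 1
  · exact hbasis _ (List.pairwise_insertionSort _ l) hred
  · push Not at hred
    obtain ⟨g, hg, hcount⟩ := hred
    exact h.eq_zero_of_odd_count hg hcount

end IsGradedSymmetric

lemma GradedComm.gen_mul_self_of_odd [NeZero (2 : K)] (hcomm : GradedComm K gen dg) {g : G}
    (hg : Odd (dg g)) : gen g * gen g = 0 := by
  have hsq : gen g * gen g = -(gen g * gen g) := by
    simpa [Odd.neg_one_zpow (hg.mul hg)] using hcomm g g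
  have h2 : (2 : K) • (gen g * gen g) = 0 := by
    rw [two_smul, eq_neg_iff_add_eq_zero.1 hsq]
  exact (smul_eq_zero.1 h2).resolve_left two_ne_zero

lemma GradedComm.isGradedSymmetric_mon [NeZero (2 : K)] (hcomm : GradedComm K gen dg) :
    IsGradedSymmetric K dg (mon gen) := by
  refine ⟨fun u v a c => ?_, fun g v hg => ?_⟩
  · rw [mon_append, mon_append, mon_cons, mon_cons, mon_cons, mon_cons, ← mul_assoc (gen a),
      hcomm a c, smul_mul_assoc, mul_assoc, mul_smul_comm]
  · rw [mon_cons, mon_cons, ← mul_assoc, hcomm.gen_mul_self_of_odd hg, zero_mul]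

/-- The value on `mon gen l` of the derivation of degree `r` sending `gen g` to `t g`. -/
def leibnizMon (K : Type) {A G : Type} [Field K] [Ring A] [Algebra K A] (gen : G → A)
    (dg : G → ℤ) (r : ℤ) (t : G → A) : List G → A
  | [] => 0
  | g :: l => t g * mon gen l + (-1 : K) ^ (r * dg g) • (gen g * leibnizMon K gen dg r t l)

variable {r : ℤ} {t : G → A}

lemma leibnizMon_append (u w : List G) :
    leibnizMon K gen dg r t (u ++ w) = leibnizMon K gen dg r t u * mon gen w +
      (-1 : K) ^ (r * (u.map dg).sum) • (mon gen u * leibnizMon K gen dg r t w) := by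
  induction u with
  | nil => simp [leibnizMon]
  | cons g u ih =>
    simp only [List.cons_append, leibnizMon, ih, mon_append, mon_cons, List.map_cons,
      List.sum_cons, mul_add, add_mul, smul_add, mul_smul_comm, smul_mul_assoc, smul_smul,
      mul_assoc, add_assoc, neg_one_zpow_mul]

lemma leibnizMon_mem_grading (ht : ∀ g, t g ∈ grading K gen dg (dg g + r)) (l : List G) :
    leibnizMon K gen dg r t l ∈ grading K gen dg ((l.map dg).sum + r) := by
  induction l with
  | nil => exact zero_mem _
  | cons g l ih =>
    refine add_mem ?_ (Submodule.smul_mem _ _ ?_)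
    · simpa [add_right_comm] using mul_mem_grading (ht g) (mon_mem_grading gen dg l)
    · simpa [add_assoc] using mul_mem_grading (gen_mem_grading gen dg g) ih

lemma GradedComm.isGradedSymmetric_leibnizMon [NeZero (2 : K)] (hcomm : GradedComm K gen dg)
    (ht : ∀ g, t g ∈ grading K gen dg (dg g + r)) :
    IsGradedSymmetric K dg (leibnizMon K gen dg r t) := by
  have hcomm_t : ∀ a c (x : A), t a * (gen c * x) =
      (-1 : K) ^ ((dg a + r) * dg c) • (gen c * (t a * x)) := fun a c x => by
    rw [← mul_assoc, hcomm.mul_comm_of_mem_grading (ht a) (gen_mem_grading gen dg c),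
      smul_mul_assoc, mul_assoc]
  have hcomm_gen : ∀ a c (x : A), gen a * (gen c * x) =
      (-1 : K) ^ (dg a * dg c) • (gen c * (gen a * x)) := fun a c x => by
    rw [← mul_assoc, hcomm a c, smul_mul_assoc, mul_assoc]
  have hcomm_gen_t : ∀ a c (x : A), gen a * (t c * x) =
      (-1 : K) ^ (dg a * (dg c + r)) • (t c * (gen a * x)) := fun a c x => by
    rw [← mul_assoc, hcomm.mul_comm_of_mem_grading (gen_mem_grading gen dg a) (ht c),
      smul_mul_assoc, mul_assoc]
  have hswap : ∀ a c v, leibnizMon K gen dg r t (a :: c :: v) =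
      (-1 : K) ^ (dg a * dg c) • leibnizMon K gen dg r t (c :: a :: v) := by
    intro a c v
    simp only [leibnizMon, mon_cons, mul_add, smul_add, mul_smul_comm, smul_smul, hcomm_t a c,
      hcomm_gen a c, hcomm_gen_t a c]
    match_scalars <;> simp only [mul_one, neg_one_zpow_mul] <;>
      exact neg_one_zpow_eq_of_even_sub (by ring_nf; simp [parity_simps])
  refine ⟨fun u v a c => ?_, fun g v hg => ?_⟩
  · have hmon := hcomm.isGradedSymmetric_mon.1 [] v a c
    rw [List.nil_append, List.nil_append] at hmon
    rw [leibnizMon_append, leibnizMon_append, hswap, hmon]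
    simp only [smul_add, mul_smul_comm, smul_smul, mul_comm]
  · have hsign : (-1 : K) ^ ((dg g + r) * dg g) + (-1 : K) ^ (r * dg g) = 0 := by
      rw [← neg_one_zpow_add_one_add_neg_one_zpow (r * dg g)]
      congr 1
      exact neg_one_zpow_eq_of_even_sub (by ring_nf; simp [parity_simps, hg])
    simp only [leibnizMon, mon_cons, mul_add, mul_smul_comm, hcomm_t g g,
      ← mul_assoc (gen g) (gen g), hcomm.gen_mul_self_of_odd hg, zero_mul, smul_zero, add_zero,
      ← add_smul, hsign, zero_smul]

lemma IsFreeGCAOn.exists_isGradedDer [LinearOrder G] [NeZero (2 : K)]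
    (hfree : IsFreeGCAOn K gen dg) (hcomm : GradedComm K gen dg)
    (ht : ∀ g, t g ∈ grading K gen dg (dg g + r)) :
    ∃ D : A →ₗ[K] A, IsGradedDer K gen dg r D ∧ ∀ g, D (gen g) = t g := by
  obtain ⟨b, hb⟩ := id hfree
  set D := b.constr K fun l => leibnizMon K gen dg r t l.1
  have hD : ∀ l, D (mon gen l) = leibnizMon K gen dg r t l := fun l =>
    sub_eq_zero.1 <| ((hcomm.isGradedSymmetric_mon.comp D).sub
      (hcomm.isGradedSymmetric_leibnizMon ht)).eq_zero
        (fun l hs hodd => by simp [← hb ⟨l, hs, hodd⟩, D]) l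
  refine ⟨D, ⟨fun i a ha => ?_, fun i a c ha => ?_⟩, fun g => by simpa [leibnizMon] using hD [g]⟩
  · refine (Submodule.span_le (p := (grading K gen dg (i + r)).comap D)).2 ?_ ha
    rintro _ ⟨l, rfl, rfl⟩
    simpa [hD] using leibnizMon_mem_grading ht l
  · refine grading_le_eqLocus (f := D ∘ₗ LinearMap.mulRight K c)
      (f' := LinearMap.mulRight K c ∘ₗ D + (-1 : K) ^ (r * i) • LinearMap.mulRight K (D c))
      (fun l hl => ?_) ha
    have hmul := hfree.linearMap_ext (f := D ∘ₗ LinearMap.mulLeft K (mon gen l))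
      (f' := LinearMap.mulLeft K (D (mon gen l)) +
        (-1 : K) ^ (r * i) • (LinearMap.mulLeft K (mon gen l) ∘ₗ D))
      (fun l' => by simp [← mon_append, hD, leibnizMon_append, hl])
    simpa using LinearMap.congr_fun hmul c

end FreeDerivations

section Diagonal
variable {K M ι : Type} [Field K] [AddCommGroup M] [Module K M] (b : Module.Basis ι K M)
  {E : M →ₗ[K] M} {c : ι → K}

lemma _root_.Module.Basis.repr_apply_of_apply_eq_smul (hE : ∀ i, E (b i) = c i • b i) (x : M)
    (i : ι) : b.repr (E x) i = c i * b.repr x i := by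
  have : b.coord i ∘ₗ E = c i • b.coord i := b.ext fun i' => by
    by_cases h : i' = i <;> simp [hE, h]
  simpa using LinearMap.congr_fun this x

lemma _root_.Module.Basis.constr_apply_of_apply_eq_smul (hE : ∀ i, E (b i) = c i • b i)
    (f : K → K) {x : M} {a : K} (hx : E x = a • x) :
    b.constr K (fun i => f (c i) • b i) x = f a • x := by
  apply b.repr.injective
  ext i
  have hcoord := b.repr_apply_of_apply_eq_smul hE x i
  rw [hx, map_smul, Finsupp.smul_apply, smul_eq_mul] at hcoord
  rw [b.repr_apply_of_apply_eq_smul (fun i => b.constr_basis K _ i), map_smul,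
    Finsupp.smul_apply, smul_eq_mul]
  by_cases h0 : b.repr x i = 0
  · simp [h0]
  · rw [mul_right_cancel₀ h0 hcoord]

lemma _root_.Module.Basis.constr_comp_comm_of_comp_comm (hE : ∀ i, E (b i) = c i • b i)
    (f : K → K) {D : M →ₗ[K] M} (hD : D ∘ₗ E = E ∘ₗ D) :
    b.constr K (fun i => f (c i) • b i) ∘ₗ D = D ∘ₗ b.constr K (fun i => f (c i) • b i) :=
  b.ext fun i => by
    have hDi : E (D (b i)) = c i • D (b i) := by
      rw [← LinearMap.comp_apply, ← hD, LinearMap.comp_apply, hE, map_smul]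
    simp [b.constr_apply_of_apply_eq_smul hE f hDi]

end Diagonal

def suspWeight {G : Type} : G ⊕ G ⊕ G → ℕ := Sum.elim (fun _ => 0) (fun _ => 1)

/-- The values on generators of the contracting derivation `θ`: `s^{k-1}v ↦ s^kv`. -/
def thetaGen {G DA : Type} [Ring DA] (dgen : G ⊕ G ⊕ G → DA) : G ⊕ G ⊕ G → DA :=
  Sum.elim 0 (Sum.elim (fun g => dgen (Sum.inr (Sum.inr g))) 0)

/-- The generators of `∧V ⊗ ∧s^{k-1}V ⊗ ∧s^kV` are `dgen (inl g) = v`,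
`dgen (inr (inl g)) = s^{k-1}v` and `dgen (inr (inr g)) = s^kv`; `j` is the inclusion of `∧V`,
`sk1 = s^{(k-1)}`, `sk = s^{(k)}` and `e = ε̃`. -/
structure IsDiskModel (K : Type) {A DA G : Type} [Field K] [Ring A] [Algebra K A] [Ring DA]
    [Algebra K DA] [LinearOrder (G ⊕ G ⊕ G)] (k : ℕ) (gen : G → A) (dg : G → ℤ)
    (dA : A →ₗ[K] A) (dgen : G ⊕ G ⊕ G → DA) (ddg : G ⊕ G ⊕ G → ℤ) (j : A →ₐ[K] DA)
    (sk1 sk D : DA →ₗ[K] DA) (e : DA →ₐ[K] A) : Prop where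
  one_le : 1 ≤ k
  isDifferential : IsDifferential K gen dg dA
  ddg_eq : ∀ g, ddg (Sum.inl g) = dg g ∧ ddg (Sum.inr (Sum.inl g)) = dg g - (k - 1) ∧
    ddg (Sum.inr (Sum.inr g)) = dg g - k
  free : IsFreeGCAOn K dgen ddg
  comm : GradedComm K dgen ddg
  j_gen : ∀ g, j (gen g) = dgen (Sum.inl g)
  der_sk1 : IsGradedDer K dgen ddg (-(k - 1 : ℤ)) sk1
  sk1_inl : ∀ g, sk1 (dgen (Sum.inl g)) = dgen (Sum.inr (Sum.inl g))
  der_sk : IsGradedDer K dgen ddg (-(k : ℤ)) sk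
  sk_inl : ∀ g, sk (dgen (Sum.inl g)) = dgen (Sum.inr (Sum.inr g))
  der_D : IsGradedDer K dgen ddg 1 D
  D_j : ∀ a : A, D (j a) = j (dA a)
  D_inr_inl : ∀ g, D (dgen (Sum.inr (Sum.inl g))) = ((-1 : K) ^ (k - 1)) • sk1 (j (dA (gen g)))
  D_inr_inr : ∀ g, D (dgen (Sum.inr (Sum.inr g))) =
    dgen (Sum.inr (Sum.inl g)) + ((-1 : K) ^ k) • sk (j (dA (gen g)))
  e_inl : ∀ g, e (dgen (Sum.inl g)) = gen g
  e_inr_inl : ∀ g, e (dgen (Sum.inr (Sum.inl g))) = 0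
  e_inr_inr : ∀ g, e (dgen (Sum.inr (Sum.inr g))) = 0

namespace IsDiskModel
variable {K A DA G : Type} [Field K] [Ring A] [Algebra K A] [Ring DA] [Algebra K DA]
  [LinearOrder (G ⊕ G ⊕ G)] {k : ℕ} {gen : G → A} {dg : G → ℤ} {dA : A →ₗ[K] A}
  {dgen : G ⊕ G ⊕ G → DA} {ddg : G ⊕ G ⊕ G → ℤ} {j : A →ₐ[K] DA} {sk1 sk D : DA →ₗ[K] DA}
  {e : DA →ₐ[K] A} (M : IsDiskModel K k gen dg dA dgen ddg j sk1 sk D e)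
include M

lemma j_gen_mem_grading (g : G) : j (gen g) ∈ grading K dgen ddg (dg g) := by
  rw [M.j_gen, ← (M.ddg_eq g).1]
  exact gen_mem_grading dgen ddg _

lemma j_mem_grading {n : ℤ} {a : A} (ha : a ∈ grading K gen dg n) :
    j a ∈ grading K dgen ddg n :=
  map_mem_grading j M.j_gen_mem_grading ha

lemma e_gen_mem_grading (x : G ⊕ G ⊕ G) : e (dgen x) ∈ grading K gen dg (ddg x) := by
  rcases x with g | g | g
  · rw [M.e_inl, (M.ddg_eq g).1]
    exact gen_mem_grading gen dg g
  · rw [M.e_inr_inl]; exact zero_mem _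
  · rw [M.e_inr_inr]; exact zero_mem _

lemma dA_gen_mem_grading (g : G) : dA (gen g) ∈ grading K gen dg (dg g + 1) :=
  M.isDifferential.1.1 _ _ (gen_mem_grading gen dg g)

lemma e_j {n : ℤ} {a : A} (ha : a ∈ grading K gen dg n) : e (j a) = a :=
  grading_le_eqLocus (f := (e.comp j).toLinearMap) (f' := LinearMap.id)
    (fun l _ => by simp [map_mon, Function.comp_def, M.j_gen, M.e_inl]) ha

lemma D_sk1_j {n : ℤ} {a : A} (ha : a ∈ grading K gen dg n) :
    D (sk1 (j a)) = (-1 : K) ^ (k - 1) • sk1 (j (dA a)) := by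
  have hsign : (-1 : K) ^ (1 * -((k : ℤ) - 1)) = (-1) ^ (k - 1) := by
    rw [one_mul, neg_one_zpow_neg_natCast_sub_one M.one_le]
  have h := ((M.der_D.gradedBracket M.der_sk1).isGradedDerAlong.comp_right j
    M.j_gen_mem_grading).apply_eq_of_mem_grading (isGradedDerAlong_zero _ _) (fun g => ?_) ha
  · simpa only [LinearMap.comp_apply, AlgHom.toLinearMap_apply, gradedBracket_apply, hsign,
      M.D_j, LinearMap.zero_apply, sub_eq_zero] using h
  · simp only [LinearMap.comp_apply, AlgHom.toLinearMap_apply, gradedBracket_apply, hsign,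
      LinearMap.zero_apply]
    rw [M.D_j, M.j_gen, M.sk1_inl, M.D_inr_inl, sub_self]

lemma D_sk_j {n : ℤ} {a : A} (ha : a ∈ grading K gen dg n) :
    D (sk (j a)) = sk1 (j a) + (-1 : K) ^ k • sk (j (dA a)) := by
  have hsign : (-1 : K) ^ (1 * -(k : ℤ)) = (-1) ^ k := by
    rw [one_mul, neg_one_zpow_neg_natCast]
  have hsk1 : IsGradedDer K dgen ddg (1 + -(k : ℤ)) sk1 := by
    convert M.der_sk1 using 1; ring
  have h := ((M.der_D.gradedBracket M.der_sk).isGradedDerAlong.comp_right j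
    M.j_gen_mem_grading).apply_eq_of_mem_grading
      (hsk1.isGradedDerAlong.comp_right j M.j_gen_mem_grading) (fun g => ?_) ha
  · simpa only [LinearMap.comp_apply, AlgHom.toLinearMap_apply, gradedBracket_apply, hsign,
      M.D_j, sub_eq_iff_eq_add] using h
  · simp only [LinearMap.comp_apply, AlgHom.toLinearMap_apply, gradedBracket_apply, hsign]
    rw [M.D_j, M.j_gen, M.sk_inl, M.D_inr_inr, M.sk1_inl, add_sub_cancel_right]

lemma D_D_dgen (x : G ⊕ G ⊕ G) : D (D (dgen x)) = 0 := by
  rcases x with g | g | g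
  · rw [← M.j_gen, M.D_j, M.D_j, M.isDifferential.2, map_zero]
  · rw [M.D_inr_inl, map_smul, M.D_sk1_j (M.dA_gen_mem_grading g), M.isDifferential.2, map_zero,
      map_zero, smul_zero, smul_zero]
  · rw [M.D_inr_inr, map_add, map_smul, M.D_inr_inl, M.D_sk_j (M.dA_gen_mem_grading g),
      M.isDifferential.2, map_zero, map_zero, smul_zero, add_zero, ← add_smul,
      neg_one_pow_sub_one_add_neg_one_pow M.one_le, zero_smul]

lemma D_comp_D [NeZero (2 : K)] (z : DA) : D (D z) = 0 := by
  -- `[D, D] = 2 D²` is a derivation vanishing on the generators.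
  have h := (M.der_D.gradedBracket M.der_D).isGradedDerAlong.eq_of_isFreeGCAOn M.free
    (isGradedDerAlong_zero _ _) (fun x => by simp [gradedBracket_apply, M.D_D_dgen x])
  have h2 : (2 : K) • D (D z) = 0 := by
    simpa [gradedBracket_apply, two_smul] using LinearMap.congr_fun h z
  exact (smul_eq_zero.1 h2).resolve_left two_ne_zero

lemma e_sk1_j {n : ℤ} {a : A} (ha : a ∈ grading K gen dg n) : e (sk1 (j a)) = 0 :=
  ((M.der_sk1.isGradedDerAlong.comp_left e).comp_right j
    M.j_gen_mem_grading).apply_eq_of_mem_grading (isGradedDerAlong_zero _ _)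
      (fun g => by simp [M.j_gen, M.sk1_inl, M.e_inr_inl]) ha

lemma e_sk_j {n : ℤ} {a : A} (ha : a ∈ grading K gen dg n) : e (sk (j a)) = 0 :=
  ((M.der_sk.isGradedDerAlong.comp_left e).comp_right j
    M.j_gen_mem_grading).apply_eq_of_mem_grading (isGradedDerAlong_zero _ _)
      (fun g => by simp [M.j_gen, M.sk_inl, M.e_inr_inr]) ha

lemma dA_comp_e (z : DA) : dA (e z) = e (D z) := by
  have h₁ := M.isDifferential.1.isGradedDerAlong.comp_right e M.e_gen_mem_grading
  have h₂ := M.der_D.isGradedDerAlong.comp_left e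
  rw [AlgHom.id_comp] at h₁
  rw [AlgHom.comp_id] at h₂
  refine LinearMap.congr_fun (h₁.eq_of_isFreeGCAOn M.free h₂ fun x => ?_) z
  simp only [LinearMap.comp_apply, AlgHom.toLinearMap_apply]
  rcases x with g | g | g
  · rw [M.e_inl, ← M.j_gen, M.D_j, M.e_j (M.dA_gen_mem_grading g)]
  · rw [M.e_inr_inl, map_zero, M.D_inr_inl, map_smul, M.e_sk1_j (M.dA_gen_mem_grading g),
      smul_zero]
  · rw [M.e_inr_inr, map_zero, M.D_inr_inr, map_add, map_smul, M.e_inr_inl,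
      M.e_sk_j (M.dA_gen_mem_grading g), smul_zero, add_zero]

lemma thetaGen_mem_grading (x : G ⊕ G ⊕ G) :
    thetaGen dgen x ∈ grading K dgen ddg (ddg x + -1) := by
  rcases x with g | g | g
  · exact zero_mem _
  · have hdeg : ddg (Sum.inr (Sum.inl g)) + -1 = ddg (Sum.inr (Sum.inr g)) := by
      rw [(M.ddg_eq g).2.1, (M.ddg_eq g).2.2]; ring
    exact hdeg ▸ gen_mem_grading dgen ddg _
  · exact zero_mem _

lemma j_e_mon (l : List (G ⊕ G ⊕ G)) :
    j (e (mon dgen l)) = if (l.map suspWeight).sum = 0 then mon dgen l else 0 := by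
  rw [← AlgHom.comp_apply, map_mon]
  split_ifs with hl
  · refine congrArg List.prod (List.map_congr_left fun x hx => ?_)
    rcases x with g | g | g
    · simp [M.e_inl, M.j_gen]
    all_goals
      exact absurd (List.sum_eq_zero_iff.1 hl _ (List.mem_map_of_mem hx)) (by simp [suspWeight])
  · obtain ⟨x, hx, hx0⟩ : ∃ x ∈ l, suspWeight x ≠ 0 := by
      by_contra! h
      exact hl (List.sum_eq_zero_iff.2 fun _ hn => by
        obtain ⟨x, hx, rfl⟩ := List.mem_map.1 hn
        exact h x hx)
    refine mon_eq_zero_of_mem hx ?_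
    rcases x with g | g | g
    · simp [suspWeight] at hx0
    · simp [M.e_inr_inl]
    · simp [M.e_inr_inr]

section Theta
variable {Th : DA →ₗ[K] DA} (hTh : IsGradedDer K dgen ddg (-1) Th)
  (hTh_gen : ∀ x, Th (dgen x) = thetaGen dgen x)
include hTh hTh_gen

lemma theta_j_eq_zero {n : ℤ} {a : A} (ha : a ∈ grading K gen dg n) : Th (j a) = 0 :=
  (hTh.isGradedDerAlong.comp_right j M.j_gen_mem_grading).apply_eq_of_mem_grading
    (isGradedDerAlong_zero _ _) (fun g => by simp [M.j_gen, hTh_gen, thetaGen]) ha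

lemma theta_sk1_j {n : ℤ} {a : A} (ha : a ∈ grading K gen dg n) : Th (sk1 (j a)) = sk (j a) := by
  have hsk : IsGradedDer K dgen ddg (-1 + -(k - 1 : ℤ)) sk := by
    convert M.der_sk using 1; ring
  have h := ((hTh.gradedBracket M.der_sk1).isGradedDerAlong.comp_right j
    M.j_gen_mem_grading).apply_eq_of_mem_grading
      (hsk.isGradedDerAlong.comp_right j M.j_gen_mem_grading) (fun g => ?_) ha
  · simpa [gradedBracket_apply, M.theta_j_eq_zero hTh hTh_gen ha] using h
  · simp [gradedBracket_apply, M.j_gen, M.sk1_inl, M.sk_inl, hTh_gen, thetaGen]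

lemma theta_sk_j_eq_zero {n : ℤ} {a : A} (ha : a ∈ grading K gen dg n) : Th (sk (j a)) = 0 := by
  have h := ((hTh.gradedBracket M.der_sk).isGradedDerAlong.comp_right j
    M.j_gen_mem_grading).apply_eq_of_mem_grading (isGradedDerAlong_zero _ _) (fun g => ?_) ha
  · simpa [gradedBracket_apply, M.theta_j_eq_zero hTh hTh_gen ha] using h
  · simp [gradedBracket_apply, M.j_gen, M.sk_inl, hTh_gen, thetaGen]

lemma gradedBracket_D_theta_dgen (x : G ⊕ G ⊕ G) :
    gradedBracket 1 (-1) D Th (dgen x) = (suspWeight x : K) • dgen x := by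
  have hsign : (-1 : K) ^ ((1 : ℤ) * -1) = -1 := by norm_num
  have hdA := M.dA_gen_mem_grading
  rcases x with g | g | g
  · rw [gradedBracket_apply, hsign, hTh_gen, ← M.j_gen, M.D_j,
      M.theta_j_eq_zero hTh hTh_gen (hdA g)]
    simp [thetaGen, suspWeight]
  · rw [gradedBracket_apply, hsign, hTh_gen, M.D_inr_inl, map_smul,
      M.theta_sk1_j hTh hTh_gen (hdA g)]
    simp only [thetaGen, Sum.elim_inr, Sum.elim_inl, M.D_inr_inr, suspWeight, Nat.cast_one,
      one_smul, neg_smul, sub_neg_eq_add, add_assoc, ← add_smul]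
    rw [add_comm ((-1 : K) ^ k), neg_one_pow_sub_one_add_neg_one_pow M.one_le, zero_smul,
      add_zero]
  · rw [gradedBracket_apply, hsign, hTh_gen, M.D_inr_inr, map_add, map_smul, hTh_gen,
      M.theta_sk_j_eq_zero hTh hTh_gen (hdA g)]
    simp [thetaGen, suspWeight]

end Theta

lemma exists_theta [NeZero (2 : K)] : ∃ Th : DA →ₗ[K] DA, IsGradedDer K dgen ddg (-1) Th ∧
    ∀ l, gradedBracket 1 (-1) D Th (mon dgen l) =
      (((l.map suspWeight).sum : ℕ) : K) • mon dgen l := by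
  obtain ⟨Th, hTh, hTh_gen⟩ := M.free.exists_isGradedDer M.comm M.thetaGen_mem_grading
  refine ⟨Th, hTh, fun l => ?_⟩
  have hE : IsGradedDer K dgen ddg 0 (gradedBracket 1 (-1) D Th) := by
    simpa using M.der_D.gradedBracket hTh
  rw [hE.apply_mon_of_apply_gen_eq_smul (M.gradedBracket_D_theta_dgen hTh hTh_gen),
    Nat.cast_list_sum, List.map_map]
  rfl

lemma exists_contraction [CharZero K] : ∃ H : DA →ₗ[K] DA,
    (∀ {n : ℤ} {z : DA}, z ∈ grading K dgen ddg n → H z ∈ grading K dgen ddg (n - 1)) ∧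
      ∀ z, D (H z) + H (D z) = z - j (e z) := by
  obtain ⟨Th, hTh, hE_mon⟩ := M.exists_theta
  set E := gradedBracket 1 (-1) D Th
  have hE_apply : ∀ z, E z = D (Th z) + Th (D z) := fun z => by
    simp [E, gradedBracket_apply]
  have hDE : D ∘ₗ E = E ∘ₗ D := LinearMap.ext fun z => by
    simp [hE_apply, M.D_comp_D]
  obtain ⟨b, hb⟩ := M.free
  have hEb : ∀ i, E (b i) = (((i.1.map suspWeight).sum : ℕ) : K) • b i := fun i => by
    rw [hb]; exact hE_mon _
  -- As `0⁻¹ = 0`, `R` inverts `E` on monomials with a suspended letter and kills the others.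
  set R := b.constr K fun i => (((i.1.map suspWeight).sum : ℕ) : K)⁻¹ • b i
  have hRD : R ∘ₗ D = D ∘ₗ R := b.constr_comp_comm_of_comp_comm hEb _ hDE
  have hR_mon : ∀ l, R (mon dgen l) = (((l.map suspWeight).sum : ℕ) : K)⁻¹ • mon dgen l :=
    fun l => b.constr_apply_of_apply_eq_smul hEb _ (hE_mon l)
  have hER : E ∘ₗ R = LinearMap.id - (j.comp e).toLinearMap := by
    refine M.free.linearMap_ext fun l => ?_
    simp only [LinearMap.comp_apply, hR_mon, map_smul, hE_mon, smul_smul, LinearMap.sub_apply,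
      LinearMap.id_apply, AlgHom.toLinearMap_apply, AlgHom.comp_apply, M.j_e_mon]
    split_ifs with hl
    · simp [hl]
    · rw [inv_mul_cancel₀ (Nat.cast_ne_zero.2 hl), one_smul, sub_zero]
  refine ⟨Th ∘ₗ R, fun {n z} hz => ?_, fun z => ?_⟩
  · have hRz : R z ∈ grading K dgen ddg n := by
      refine (Submodule.span_le (p := (grading K dgen ddg n).comap R)).2 ?_ hz
      rintro _ ⟨l, rfl, rfl⟩
      simpa [hR_mon] using Submodule.smul_mem _ _ (mon_mem_grading dgen ddg l)
    simpa [sub_eq_add_neg] using hTh.1 _ _ hRz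
  · rw [LinearMap.comp_apply, LinearMap.comp_apply, ← LinearMap.comp_apply R D, hRD,
      LinearMap.comp_apply, ← hE_apply, ← LinearMap.comp_apply E R, hER]
    rfl

lemma exists_primitive [CharZero K] {n : ℤ} {z : DA} (hz : z ∈ grading K dgen ddg n)
    (hDz : D z = 0) {a : A} (ha : a ∈ grading K gen dg (n - 1)) (hza : e z = dA a) :
    ∃ w ∈ grading K dgen ddg (n - 1), D w = z := by
  obtain ⟨H, hH_mem, hH⟩ := M.exists_contraction
  refine ⟨j a + H z, add_mem (M.j_mem_grading ha) (hH_mem hz), ?_⟩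
  rw [map_add, M.D_j, ← hza, ← add_zero (D (H z)), ← map_zero H, ← hDz, hH, add_sub_cancel]

end IsDiskModel

theorem disk_model_differential_and_quasiIso_general
    (K A DA G : Type) [Field K] [CharZero K] [Ring A] [Algebra K A] [Ring DA] [Algebra K DA]
    [LinearOrder (G ⊕ G ⊕ G)] (k : ℕ) (hk : 2 ≤ k)
    -- the Sullivan algebra (∧V, d)
    (gen : G → A) (dg : G → ℤ)
    (dA : A →ₗ[K] A) (hdA : IsDifferential K gen dg dA)
    -- the free graded-commutative algebra ∧V ⊗ ∧s^{k-1}V ⊗ ∧s^kV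
    (dgen : G ⊕ G ⊕ G → DA) (ddg : G ⊕ G ⊕ G → ℤ)
    (hddg : ∀ g, ddg (Sum.inl g) = dg g ∧ ddg (Sum.inr (Sum.inl g)) = dg g - (k - 1) ∧
      ddg (Sum.inr (Sum.inr g)) = dg g - k)
    (hDfree : IsFreeGCAOn K dgen ddg) (hDcomm : GradedComm K dgen ddg)
    (j : A →ₐ[K] DA) (hj : ∀ g, j (gen g) = dgen (Sum.inl g))
    -- the derivation s^{(k-1)}: v ↦ s^{k-1}v, other generators ↦ 0
    (sk1 : DA →ₗ[K] DA) (hsk1 : IsGradedDer K dgen ddg (-(k - 1 : ℤ)) sk1)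
    (hsk1a : ∀ g, sk1 (dgen (Sum.inl g)) = dgen (Sum.inr (Sum.inl g)))
    -- the derivation s^{(k)}: v ↦ s^kv, other generators ↦ 0
    (sk : DA →ₗ[K] DA) (hsk : IsGradedDer K dgen ddg (-(k : ℤ)) sk)
    (hska : ∀ g, sk (dgen (Sum.inl g)) = dgen (Sum.inr (Sum.inr g)))
    -- the differential D on the disk model, and the augmentation ε̃
    (D : DA →ₗ[K] DA) (hDder : IsGradedDer K dgen ddg 1 D)
    (hD1 : ∀ a : A, D (j a) = j (dA a))
    (hD2 : ∀ g, D (dgen (Sum.inr (Sum.inl g))) = ((-1 : K) ^ (k - 1)) • sk1 (j (dA (gen g))))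
    (hD3 : ∀ g, D (dgen (Sum.inr (Sum.inr g))) =
      dgen (Sum.inr (Sum.inl g)) + ((-1 : K) ^ k) • sk (j (dA (gen g))))
    (e : DA →ₐ[K] A) (he1 : ∀ g, e (dgen (Sum.inl g)) = gen g)
    (he2 : ∀ g, e (dgen (Sum.inr (Sum.inl g))) = 0)
    (he3 : ∀ g, e (dgen (Sum.inr (Sum.inr g))) = 0) :
    -- d ∘ d = 0, ε̃ is a chain map, and ε̃ is a quasi-isomorphism
    (∀ z, D (D z) = 0) ∧
    (∀ z, dA (e z) = e (D z)) ∧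
    (∀ (n : ℤ) (a : A), a ∈ grading K gen dg n → dA a = 0 →
      ∃ z ∈ grading K dgen ddg n, D z = 0 ∧ ∃ b ∈ grading K gen dg (n - 1), e z - a = dA b) ∧
    (∀ (n : ℤ) (z : DA), z ∈ grading K dgen ddg n → D z = 0 →
      (∃ b ∈ grading K gen dg (n - 1), e z = dA b) →
      ∃ w ∈ grading K dgen ddg (n - 1), D w = z) := by
  have M : IsDiskModel K k gen dg dA dgen ddg j sk1 sk D e :=
    ⟨by omega, hdA, hddg, hDfree, hDcomm, hj, hsk1, hsk1a, hsk, hska, hDder, hD1, hD2, hD3, he1,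
      he2, he3⟩
  refine ⟨M.D_comp_D, M.dA_comp_e, fun n a ha hda => ?_,
    fun n z hz hDz ⟨b, hb, hzb⟩ => M.exists_primitive hz hDz hb hzb⟩
  exact ⟨j a, M.j_mem_grading ha, by rw [hD1, hda, map_zero], 0, zero_mem _,
    by rw [M.e_j ha, sub_self, map_zero]⟩

/-- Let `k ≥ 2` and `(∧V, d)` a Sullivan algebra with `dim V < ∞`.
On `∧V ⊗ ∧s^{k-1}V ⊗ ∧s^kV` define the degree `1` derivation `d` by `d(v) = dv`,
`d(s^{k-1}v) = (−1)^{k-1}s^{(k-1)}(dv)`, `d(s^kv) = s^{k-1}v + (−1)^k s^{(k)}(dv)`.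
Then `d ∘ d = 0`, and the map `ε̃ : ∧V ⊗ ∧s^{k-1}V ⊗ ∧s^kV → ∧V`, `v ↦ v`,
`s^{k-1}v ↦ 0`, `s^kv ↦ 0`, is a quasi-isomorphism of dgas. -/
theorem disk_model_differential_and_quasiIso
    (K A DA G : Type) [Field K] [CharZero K] [Ring A] [Algebra K A] [Ring DA] [Algebra K DA]
    [Fintype G] [LinearOrder G] [LinearOrder (G ⊕ G ⊕ G)] (k : ℕ) (hk : 2 ≤ k)
    -- the Sullivan algebra (∧V, d)
    (gen : G → A) (dg : G → ℤ) (hpos : ∀ g, 1 ≤ dg g)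
    (hfree : IsFreeGCAOn K gen dg) (hcomm : GradedComm K gen dg)
    (dA : A →ₗ[K] A) (hdA : IsDifferential K gen dg dA) (hS : SullivanCond K gen dA)
    -- the free graded-commutative algebra ∧V ⊗ ∧s^{k-1}V ⊗ ∧s^kV
    (dgen : G ⊕ G ⊕ G → DA) (ddg : G ⊕ G ⊕ G → ℤ)
    (hddg : ∀ g, ddg (Sum.inl g) = dg g ∧ ddg (Sum.inr (Sum.inl g)) = dg g - (k - 1) ∧
      ddg (Sum.inr (Sum.inr g)) = dg g - k)
    (hDfree : IsFreeGCAOn K dgen ddg) (hDcomm : GradedComm K dgen ddg)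
    (j : A →ₐ[K] DA) (hj : ∀ g, j (gen g) = dgen (Sum.inl g))
    -- the derivation s^{(k-1)}: v ↦ s^{k-1}v, other generators ↦ 0
    (sk1 : DA →ₗ[K] DA) (hsk1 : IsGradedDer K dgen ddg (-(k - 1 : ℤ)) sk1)
    (hsk1a : ∀ g, sk1 (dgen (Sum.inl g)) = dgen (Sum.inr (Sum.inl g)))
    (hsk1b : ∀ g, sk1 (dgen (Sum.inr (Sum.inl g))) = 0)
    (hsk1c : ∀ g, sk1 (dgen (Sum.inr (Sum.inr g))) = 0)
    -- the derivation s^{(k)}: v ↦ s^kv, other generators ↦ 0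
    (sk : DA →ₗ[K] DA) (hsk : IsGradedDer K dgen ddg (-(k : ℤ)) sk)
    (hska : ∀ g, sk (dgen (Sum.inl g)) = dgen (Sum.inr (Sum.inr g)))
    (hskb : ∀ g, sk (dgen (Sum.inr (Sum.inl g))) = 0)
    (hskc : ∀ g, sk (dgen (Sum.inr (Sum.inr g))) = 0)
    -- the differential D on the disk model, and the augmentation ε̃
    (D : DA →ₗ[K] DA) (hDder : IsGradedDer K dgen ddg 1 D)
    (hD1 : ∀ a : A, D (j a) = j (dA a))
    (hD2 : ∀ g, D (dgen (Sum.inr (Sum.inl g))) = ((-1 : K) ^ (k - 1)) • sk1 (j (dA (gen g))))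
    (hD3 : ∀ g, D (dgen (Sum.inr (Sum.inr g))) =
      dgen (Sum.inr (Sum.inl g)) + ((-1 : K) ^ k) • sk (j (dA (gen g))))
    (e : DA →ₐ[K] A) (he1 : ∀ g, e (dgen (Sum.inl g)) = gen g)
    (he2 : ∀ g, e (dgen (Sum.inr (Sum.inl g))) = 0)
    (he3 : ∀ g, e (dgen (Sum.inr (Sum.inr g))) = 0) :
    -- d ∘ d = 0, ε̃ is a chain map, and ε̃ is a quasi-isomorphism
    (∀ z, D (D z) = 0) ∧
    (∀ z, dA (e z) = e (D z)) ∧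
    (∀ (n : ℤ) (a : A), a ∈ grading K gen dg n → dA a = 0 →
      ∃ z ∈ grading K dgen ddg n, D z = 0 ∧ ∃ b ∈ grading K gen dg (n - 1), e z - a = dA b) ∧
    (∀ (n : ℤ) (z : DA), z ∈ grading K dgen ddg n → D z = 0 →
      (∃ b ∈ grading K gen dg (n - 1), e z = dA b) →
      ∃ w ∈ grading K dgen ddg (n - 1), D w = z) :=
  disk_model_differential_and_quasiIso_general K A DA G k hk gen dg dA hdA dgen ddg hddg hDfree
    hDcomm j hj sk1 hsk1 hsk1a sk hsk hska D hDder hD1 hD2 hD3 e he1 he2 he3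

end Brane
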